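/- For any two distinct greedy words c, d of length n, the length of the intersection I_c ∩ I_d belongs to the set {0, 1/φ^{n+1}, 1/φⁿ, 1/φ^{n-1}}. -/

import Mathlib

noncomputable def phi : ℝ := (1 + Real.sqrt 5) / 2

/-- Value of a binary word in base φ. -/
noncomputable def val {n : ℕ} (c : Fin n → Fin 2) : ℝ :=
  ∑ i : Fin n, (c i : ℕ) / phi ^ ((i : ℕ) + 1)

/-- A binary word avoids the factor `011`. -/
def Greedy {n : ℕ} (c : Fin n → Fin 2) : Prop :=
  ∀ i j k : Fin n, (j : ℕ) = (i : ℕ) + 1 → (k : ℕ) = (i : ℕ) + 2 →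
    ¬ (c i = 0 ∧ c j = 1 ∧ c k = 1)

/-- The interval `I_c = [v(c), v(c) + 1/φ^(n-1)]`. -/
noncomputable def I {n : ℕ} (c : Fin n → Fin 2) : Set ℝ :=
  Set.Icc (val c) (val c + 1 / phi ^ (n - 1))

/-!
Write `r = φ⁻¹`, so that `r ^ 2 + r = 1` and `val` of a word `a :: w` is `r * (a + val w)`.
If two greedy words of length `n + 1` share their first letter, the distance of their values is
`r` times the distance of the values of their tails. If they differ there, say `c` starts with `1`
and `d` with `0`, then `val c = r + r * val (tail c)` with `val (tail c) = 0` or `≥ r ^ n`, while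
avoiding `011` forces `val d` to lie below `r - r ^ n` unless `d = 0101…`, where
`val d = r - r ^ (n + 1)` or `r - r ^ (n + 2)`. Hence `|val c - val d|` is `0`, `r ^ (n + 2)`,
`r ^ (n + 1)` or at least `r ^ n`, and the intersection of two intervals of length `r ^ n` has
length `max (r ^ n - |val c - val d|) 0`.
-/

open MeasureTheory

lemma phi_eq_goldenRatio : phi = Real.goldenRatio := rfl

lemma inv_phi_pos : 0 < phi⁻¹ := inv_pos.mpr Real.goldenRatio_pos

lemma inv_phi_le_one : phi⁻¹ ≤ 1 := inv_le_one_of_one_le₀ Real.one_lt_goldenRatio.le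

lemma inv_phi_mul_phi : phi⁻¹ * phi = 1 := inv_mul_cancel₀ Real.goldenRatio_ne_zero

lemma inv_phi_sq_add_inv_phi : phi⁻¹ ^ 2 + phi⁻¹ = 1 := by
  rw [phi_eq_goldenRatio, Real.inv_goldenRatio]
  linear_combination Real.goldenConj_sq

lemma inv_phi_add_one : phi⁻¹ + 1 = phi := by
  rw [phi_eq_goldenRatio, Real.inv_goldenRatio]
  linear_combination Real.one_sub_goldenRatio

lemma inv_phi_pow_eq_add (k : ℕ) : phi⁻¹ ^ k = phi⁻¹ ^ (k + 1) + phi⁻¹ ^ (k + 2) := by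
  linear_combination (-phi⁻¹ ^ k) * inv_phi_sq_add_inv_phi

lemma fin_two_eq_zero_or_one (x : Fin 2) : x = 0 ∨ x = 1 := by omega

section Words

variable {n : ℕ}

lemma val_fin_zero (c : Fin 0 → Fin 2) : val c = 0 := by simp [val]

lemma val_succ (c : Fin (n + 1) → Fin 2) :
    val c = phi⁻¹ * ((c 0 : ℕ) + val (Fin.tail c)) := by
  rw [val, val, Fin.sum_univ_succ, mul_add, Finset.mul_sum]
  congr 1
  · simp [div_eq_inv_mul]
  · refine Finset.sum_congr rfl fun i _ => ?_
    rw [Fin.val_succ, Fin.tail, pow_succ, div_mul_eq_div_div, div_eq_inv_mul]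

lemma Greedy.tail {c : Fin (n + 1) → Fin 2} (hc : Greedy c) : Greedy (Fin.tail c) :=
  fun i j k hj hk => hc i.succ j.succ k.succ (by simp [hj]) (by simp [hk])

lemma Greedy.apply_two {c : Fin (n + 3) → Fin 2} (hc : Greedy c) (h0 : c 0 = 0) (h1 : c 1 = 1) :
    c 2 = 0 := by
  rcases fin_two_eq_zero_or_one (c 2) with h2 | h2
  · exact h2
  · exact absurd ⟨h0, h1, h2⟩ (hc 0 1 2 rfl rfl)

lemma val_le (c : Fin n → Fin 2) : val c ≤ phi * (1 - phi⁻¹ ^ n) := by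
  induction n with
  | zero => simp [val_fin_zero]
  | succ m ih =>
    have hc0 : ((c 0 : ℕ) : ℝ) ≤ 1 := by exact_mod_cast Nat.lt_succ_iff.mp (c 0).isLt
    calc val c = phi⁻¹ * ((c 0 : ℕ) + val (Fin.tail c)) := val_succ c
      _ ≤ phi⁻¹ * (1 + phi * (1 - phi⁻¹ ^ m)) := by gcongr; exacts [inv_phi_pos.le, ih _]
      _ = phi * (1 - phi⁻¹ ^ (m + 1)) := by
        linear_combination inv_phi_mul_phi + inv_phi_add_one

lemma val_eq_zero_or_inv_phi_pow_le (c : Fin n → Fin 2) : val c = 0 ∨ phi⁻¹ ^ n ≤ val c := by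
  induction n with
  | zero => exact Or.inl (val_fin_zero c)
  | succ m ih =>
    rw [val_succ]
    rcases fin_two_eq_zero_or_one (c 0) with h0 | h0
    · rcases ih (Fin.tail c) with h | h
      · left; simp [h0, h]
      · right; rw [h0, pow_succ']; simpa using mul_le_mul_of_nonneg_left h inv_phi_pos.le
    · right
      have htail : 0 ≤ val (Fin.tail c) := by
        rcases ih (Fin.tail c) with h | h
        · exact h.ge
        · exact (pow_pos inv_phi_pos m).le.trans h
      rw [h0, pow_succ', Fin.val_one, Nat.cast_one]
      gcongr
      · exact inv_phi_pos.le
      · linarith [pow_le_one₀ (n := m) inv_phi_pos.le inv_phi_le_one]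

lemma val_succ_succ (c : Fin (n + 2) → Fin 2) :
    val c = phi⁻¹ * (c 0 : ℕ) + phi⁻¹ ^ 2 * ((c 1 : ℕ) + val (Fin.tail (Fin.tail c))) := by
  rw [val_succ, val_succ (Fin.tail c)]
  simp only [Fin.tail, Fin.succ_zero_eq_one]
  ring

lemma Greedy.val_of_head_eq_zero {d : Fin (n + 1) → Fin 2} (hd : Greedy d) (h0 : d 0 = 0) :
    val d ≤ phi⁻¹ - phi⁻¹ ^ n ∨ val d = phi⁻¹ - phi⁻¹ ^ (n + 1) ∨
      val d = phi⁻¹ - phi⁻¹ ^ (n + 2) := by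
  induction n using Nat.strong_induction_on with
  | _ n ih =>
    match n with
    | 0 => right; left; simp [val_succ, h0, val_fin_zero]
    | m + 1 =>
      rw [val_succ_succ, h0, Fin.val_zero, Nat.cast_zero, mul_zero, zero_add]
      rcases fin_two_eq_zero_or_one (d 1) with h1 | h1
      · left
        rw [h1, Fin.val_zero, Nat.cast_zero, zero_add]
        calc _ ≤ phi⁻¹ ^ 2 * (phi * (1 - phi⁻¹ ^ m)) := by gcongr; exact val_le _
          _ = phi⁻¹ - phi⁻¹ ^ (m + 1) := by
              linear_combination (phi⁻¹ - phi⁻¹ ^ (m + 1)) * inv_phi_mul_phi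
      · rw [h1, Fin.val_one, Nat.cast_one]
        have hstep (j : ℕ) :
            phi⁻¹ ^ 2 * (1 + (phi⁻¹ - phi⁻¹ ^ j)) = phi⁻¹ - phi⁻¹ ^ (j + 2) := by
          linear_combination phi⁻¹ * inv_phi_sq_add_inv_phi
        match m with
        | 0 => right; right; simpa [val_fin_zero] using hstep 1
        | k + 1 =>
          have h2 : Fin.tail (Fin.tail d) 0 = 0 := hd.apply_two h0 h1
          rcases ih k (by omega) hd.tail.tail h2 with h | h | h
          · left
            calc _ ≤ phi⁻¹ ^ 2 * (1 + (phi⁻¹ - phi⁻¹ ^ k)) := by gcongr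
              _ = _ := hstep k
          · right; left; rw [h, hstep]
          · right; right; rw [h, hstep]

def IsAdmissibleGap (n : ℕ) (x : ℝ) : Prop :=
  x = 0 ∨ x = phi⁻¹ ^ (n + 2) ∨ x = phi⁻¹ ^ (n + 1) ∨ phi⁻¹ ^ n ≤ x

lemma IsAdmissibleGap.inv_phi_mul {x : ℝ} (h : IsAdmissibleGap n x) :
    IsAdmissibleGap (n + 1) (phi⁻¹ * x) := by
  rcases h with h | h | h | h
  · left; rw [h, mul_zero]
  · right; left; rw [h, ← pow_succ']
  · right; right; left; rw [h, ← pow_succ']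
  · right; right; right; rw [pow_succ']; exact mul_le_mul_of_nonneg_left h inv_phi_pos.le

lemma IsAdmissibleGap.nonneg {x : ℝ} (h : IsAdmissibleGap n x) : 0 ≤ x := by
  have hpos (k : ℕ) : 0 ≤ phi⁻¹ ^ k := (pow_pos inv_phi_pos k).le
  rcases h with h | h | h | h
  · exact h.ge
  · exact h ▸ hpos _
  · exact h ▸ hpos _
  · exact (hpos n).trans h

lemma IsAdmissibleGap.abs {x : ℝ} (h : IsAdmissibleGap n x) : IsAdmissibleGap n |x| := by
  rwa [abs_of_nonneg h.nonneg]

lemma isAdmissibleGap_val_sub_of_head {c d : Fin (n + 1) → Fin 2} (hd : Greedy d)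
    (hc0 : c 0 = 1) (hd0 : d 0 = 0) : IsAdmissibleGap n (val c - val d) := by
  have hc : val c = phi⁻¹ + phi⁻¹ * val (Fin.tail c) := by simp [val_succ, hc0, mul_add]
  have hsplit := inv_phi_pow_eq_add n
  have hpos : 0 < phi⁻¹ ^ (n + 2) := pow_pos inv_phi_pos _
  have hle : phi⁻¹ ^ (n + 2) ≤ phi⁻¹ ^ (n + 1) :=
    pow_le_pow_of_le_one inv_phi_pos.le inv_phi_le_one (by omega)
  rcases val_eq_zero_or_inv_phi_pow_le (Fin.tail c) with hA | hA
  · rcases hd.val_of_head_eq_zero hd0 with h | h | h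
    · right; right; right; rw [hc, hA]; linarith
    · right; right; left; rw [hc, hA, h]; ring
    · right; left; rw [hc, hA, h]; ring
  · have hA' : phi⁻¹ ^ (n + 1) ≤ phi⁻¹ * val (Fin.tail c) := by
      rw [pow_succ']; exact mul_le_mul_of_nonneg_left hA inv_phi_pos.le
    right; right; right
    rcases hd.val_of_head_eq_zero hd0 with h | h | h <;> rw [hc] <;> linarith

lemma isAdmissibleGap_abs_val_sub_of_head_ne {c d : Fin (n + 1) → Fin 2} (hc : Greedy c)
    (hd : Greedy d) (h : c 0 ≠ d 0) : IsAdmissibleGap n |val c - val d| := by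
  rcases fin_two_eq_zero_or_one (c 0) with hc0 | hc0 <;>
    rcases fin_two_eq_zero_or_one (d 0) with hd0 | hd0
  · exact absurd (hc0.trans hd0.symm) h
  · rw [abs_sub_comm]; exact (isAdmissibleGap_val_sub_of_head hc hd0 hc0).abs
  · exact (isAdmissibleGap_val_sub_of_head hd hc0 hd0).abs
  · exact absurd (hc0.trans hd0.symm) h

lemma abs_val_sub_of_head_eq {c d : Fin (n + 1) → Fin 2} (h : c 0 = d 0) :
    |val c - val d| = phi⁻¹ * |val (Fin.tail c) - val (Fin.tail d)| := by
  rw [val_succ, val_succ d, h, ← mul_sub, add_sub_add_left_eq_sub, abs_mul,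
    abs_of_pos inv_phi_pos]

lemma Greedy.isAdmissibleGap_abs_val_sub {c d : Fin (n + 1) → Fin 2} (hc : Greedy c)
    (hd : Greedy d) : IsAdmissibleGap n |val c - val d| := by
  induction n with
  | zero =>
    by_cases h : c 0 = d 0
    · left; simp [abs_val_sub_of_head_eq h, val_fin_zero]
    · exact isAdmissibleGap_abs_val_sub_of_head_ne hc hd h
  | succ m ih =>
    by_cases h : c 0 = d 0
    · rw [abs_val_sub_of_head_eq h]; exact (ih hc.tail hd.tail).inv_phi_mul
    · exact isAdmissibleGap_abs_val_sub_of_head_ne hc hd h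

lemma IsAdmissibleGap.max_inv_phi_pow_sub_mem {x : ℝ} (h : IsAdmissibleGap n x) :
    max (phi⁻¹ ^ n - x) 0 ∈ ({0, phi⁻¹ ^ (n + 2), phi⁻¹ ^ (n + 1), phi⁻¹ ^ n} : Set ℝ) := by
  have hsplit := inv_phi_pow_eq_add n
  have hpos (k : ℕ) : 0 ≤ phi⁻¹ ^ k := (pow_pos inv_phi_pos k).le
  simp only [Set.mem_insert_iff, Set.mem_singleton_iff]
  rcases h with h | h | h | h
  · right; right; right; rw [h, sub_zero, max_eq_left (hpos n)]
  · right; right; left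
    rw [show phi⁻¹ ^ n - x = phi⁻¹ ^ (n + 1) by linarith, max_eq_left (hpos _)]
  · right; left
    rw [show phi⁻¹ ^ n - x = phi⁻¹ ^ (n + 2) by linarith, max_eq_left (hpos _)]
  · left; exact max_eq_right (sub_nonpos.mpr h)

end Words

lemma volume_Icc_inter_Icc_add (a b L : ℝ) :
    volume (Set.Icc a (a + L) ∩ Set.Icc b (b + L)) = ENNReal.ofReal (L - |a - b|) := by
  rw [Set.Icc_inter_Icc, Real.volume_Icc]
  congr 1
  rcases le_total a b with h | h
  · rw [max_eq_right h, min_eq_left (by linarith), abs_of_nonpos (by linarith)]; ring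
  · rw [max_eq_left h, min_eq_right (by linarith), abs_of_nonneg (by linarith)]; ring

theorem intersection_lengths_general {n : ℕ} (hn : 1 ≤ n) (c d : Fin n → Fin 2)
    (hc : Greedy c) (hd : Greedy d) :
    (MeasureTheory.volume (I c ∩ I d)).toReal ∈
      ({0, 1 / phi ^ (n + 1), 1 / phi ^ n, 1 / phi ^ (n - 1)} : Set ℝ) := by
  obtain ⟨m, rfl⟩ : ∃ m, n = m + 1 := ⟨n - 1, by omega⟩
  rw [I, I, Nat.add_sub_cancel, volume_Icc_inter_Icc_add, ENNReal.toReal_ofReal']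
  simpa only [one_div, inv_pow] using (hc.isAdmissibleGap_abs_val_sub hd).max_inv_phi_pow_sub_mem

theorem intersection_lengths {n : ℕ} (hn : 1 ≤ n) (c d : Fin n → Fin 2)
    (hc : Greedy c) (hd : Greedy d) (hcd : c ≠ d) :
    (MeasureTheory.volume (I c ∩ I d)).toReal ∈
      ({0, 1 / phi ^ (n + 1), 1 / phi ^ n, 1 / phi ^ (n - 1)} : Set ℝ) :=
  intersection_lengths_general hn c d hc hd
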